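/- The round-up division TRS R = { p(0) → 0, p(s(x)) → x, x − 0 → x, x − s(y) → p(x) − y, 0 ÷ s(y) → 0, s(x) ÷ s(y) → s((x − y) ÷ s(y)) } over the signature {0, s, p, −, ÷} is terminating: its rewrite relation →_R is well-founded. -/
import Mathlib


/-- First-order terms over a signature `F` with arity function `ar` and variables `V`. -/
inductive Term (F : Type) (ar : F → ℕ) (V : Type) : Type where
  | var : V → Term F ar V
  | app : (f : F) → (Fin (ar f) → Term F ar V) → Term F ar V

namespace Term

variable {F V : Type} {ar : F → ℕ}

/-- Application of a substitution `σ : V → Term F ar V` to a term. -/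
def subst (σ : V → Term F ar V) : Term F ar V → Term F ar V
  | var v => σ v
  | app f args => app f (fun i => (args i).subst σ)

/-- Interpretation of a term in an `F`-algebra with carrier `A` under assignment `α`. -/
def eval {A : Type} (I : (f : F) → (Fin (ar f) → A) → A) (α : V → A) :
    Term F ar V → A
  | var v => α v
  | app f args => I f (fun i => (args i).eval I α)

/-- A term is a non-variable term (function application). -/
def IsApp : Term F ar V → Prop
  | var _ => False
  | app _ _ => True

end Term

section Algebra

variable {F V A : Type}

/-- `RC lt a b` : reflexive closure of the strict order `lt`, i.e. `a ≤ b`. -/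
def RC (lt : A → A → Prop) (a b : A) : Prop := lt a b ∨ a = b

variable (ar : F → ℕ) (I : (f : F) → (Fin (ar f) → A) → A) (lt : A → A → Prop)

/-- `s >_A t` : `[α](t) < [α](s)` for every assignment `α`. -/
def GTA (s t : Term F ar V) : Prop := ∀ α : V → A, lt (t.eval I α) (s.eval I α)

/-- `s ≥_A t` : `[α](t) ≤ [α](s)` for every assignment `α`. -/
def GEA (s t : Term F ar V) : Prop := ∀ α : V → A, RC lt (t.eval I α) (s.eval I α)

/-- The algebra is simple: `f_A(a_1, …, a_n) ≥ a_i`. -/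
def Simple : Prop := ∀ (f : F) (as : Fin (ar f) → A) (i : Fin (ar f)), RC lt (as i) (I f as)

/-- The algebra is weakly monotone: `a_i > b` implies
`f_A(a_1,…,a_i,…,a_n) ≥ f_A(a_1,…,b,…,a_n)`. -/
def WeaklyMonotone : Prop :=
  ∀ (f : F) (as : Fin (ar f) → A) (i : Fin (ar f)) (b : A),
    lt b (as i) → RC lt (I f (Function.update as i b)) (I f as)

end Algebra

section WPO

variable {F V A : Type} (ar : F → ℕ) (I : (f : F) → (Fin (ar f) → A) → A)
  (lt : A → A → Prop) (prec : F → F → Prop)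

mutual
  /-- The weighted path order induced by the algebra `(A, I, lt)` and the precedence `prec`. -/
  inductive WPO : Term F ar V → Term F ar V → Prop where
    /-- (1) `s >_A t`. -/
    | alg {s t} : GTA ar I lt s t → WPO s t
    /-- (2a) `s ≥_A t` and `s_i >_wpo t`. -/
    | sub {f ss t} (i : Fin (ar f)) :
        GEA ar I lt (Term.app f ss) t → WPO (ss i) t → WPO (Term.app f ss) t
    /-- (2a) `s ≥_A t` and `s_i = t`. -/
    | subEq {f ss t} (i : Fin (ar f)) :
        GEA ar I lt (Term.app f ss) t → ss i = t → WPO (Term.app f ss) t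
    /-- (2b-i) `s ≥_A t`, `s >_wpo t_j` for all `j`, and `f ≻ g`. -/
    | prc {f ss g ts} :
        GEA ar I lt (Term.app f ss) (Term.app g ts) →
        (∀ j, WPO (Term.app f ss) (ts j)) →
        prec f g → ¬ prec g f → WPO (Term.app f ss) (Term.app g ts)
    /-- (2b-ii) `s ≥_A t`, `s >_wpo t_j` for all `j`, `f ≿ g` and lex comparison of arguments. -/
    | lex {f ss g ts} :
        GEA ar I lt (Term.app f ss) (Term.app g ts) →
        (∀ j, WPO (Term.app f ss) (ts j)) →
        prec f g → WPOLex (List.ofFn ss) (List.ofFn ts) →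
        WPO (Term.app f ss) (Term.app g ts)

  /-- Lexicographic extension of `WPO` to argument lists (of possibly different lengths). -/
  inductive WPOLex : List (Term F ar V) → List (Term F ar V) → Prop where
    | head {s t l₁ l₂} : WPO s t → WPOLex (s :: l₁) (t :: l₂)
    | tail {s l₁ l₂} : WPOLex l₁ l₂ → WPOLex (s :: l₁) (s :: l₂)
    | longer {s l₁} : WPOLex (s :: l₁) []
end

end WPO

section SPO

variable {F V : Type} {ar : F → ℕ} (qge qgt : Term F ar V → Term F ar V → Prop)

mutual
  /-- The semantic path order induced by the order pair `(qge, qgt)` (`⊒∼`, `⊐`). -/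
  inductive SPO : Term F ar V → Term F ar V → Prop where
    /-- (1) `s_i >_spo t`. -/
    | sub {f ss t} (i : Fin (ar f)) : SPO (ss i) t → SPO (Term.app f ss) t
    /-- (1) `s_i = t`. -/
    | subEq {f ss t} (i : Fin (ar f)) : ss i = t → SPO (Term.app f ss) t
    /-- (2a) `s >_spo t_j` for all `j` and `s ⊐ t`. -/
    | gt {f ss g ts} : (∀ j, SPO (Term.app f ss) (ts j)) →
        qgt (Term.app f ss) (Term.app g ts) → SPO (Term.app f ss) (Term.app g ts)
    /-- (2b) `s >_spo t_j` for all `j`, `s ⊒∼ t` and lex comparison of arguments. -/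
    | lex {f ss g ts} : (∀ j, SPO (Term.app f ss) (ts j)) →
        qge (Term.app f ss) (Term.app g ts) →
        SPOLex (List.ofFn ss) (List.ofFn ts) → SPO (Term.app f ss) (Term.app g ts)

  /-- Lexicographic extension of `SPO` to argument lists. -/
  inductive SPOLex : List (Term F ar V) → List (Term F ar V) → Prop where
    | head {s t l₁ l₂} : SPO s t → SPOLex (s :: l₁) (t :: l₂)
    | tail {s l₁ l₂} : SPOLex l₁ l₂ → SPOLex (s :: l₁) (s :: l₂)
    | longer {s l₁} : SPOLex (s :: l₁) []
end

end SPO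

section Props

variable {F V : Type} {ar : F → ℕ}

/-- Closure under contexts: replacing one argument. -/
def ClosedCtx (R : Term F ar V → Term F ar V → Prop) : Prop :=
  ∀ (f : F) (args : Fin (ar f) → Term F ar V) (i : Fin (ar f)) (s t : Term F ar V),
    R s t → R (Term.app f (Function.update args i s)) (Term.app f (Function.update args i t))

/-- Closure under substitutions. -/
def ClosedSubst (R : Term F ar V → Term F ar V → Prop) : Prop :=
  ∀ (σ : V → Term F ar V) (s t : Term F ar V), R s t → R (s.subst σ) (t.subst σ)

/-- A reduction order: a well-founded strict order closed under contexts and substitutions. -/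
def ReductionOrder (R : Term F ar V → Term F ar V → Prop) : Prop :=
  (∀ s, ¬ R s s) ∧ Transitive R ∧ WellFounded (fun s t => R t s) ∧
    ClosedCtx R ∧ ClosedSubst R

/-- `Subterm t s` : `t` is a subterm of `s`. -/
inductive Subterm : Term F ar V → Term F ar V → Prop where
  | refl {t} : Subterm t t
  | arg {t f ss} (i : Fin (ar f)) : Subterm t (ss i) → Subterm t (Term.app f ss)

/-- `ProperSubterm t s` : `t` is a proper subterm of `s`. -/
def ProperSubterm (t s : Term F ar V) : Prop :=
  ∃ (f : F) (ss : Fin (ar f) → Term F ar V) (i : Fin (ar f)),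
    s = Term.app f ss ∧ Subterm t (ss i)

/-- The rewrite relation of a TRS `R`: closure of the rules under substitutions and contexts. -/
inductive Rewrite (R : Set (Term F ar V × Term F ar V)) : Term F ar V → Term F ar V → Prop where
  | rule {l r} (σ : V → Term F ar V) : (l, r) ∈ R → Rewrite R (l.subst σ) (r.subst σ)
  | ctx {s t} (f : F) (args : Fin (ar f) → Term F ar V) (i : Fin (ar f)) :
      Rewrite R s t →
      Rewrite R (Term.app f (Function.update args i s)) (Term.app f (Function.update args i t))

end Props

section Pair

variable {F V A : Type} (ar : F → ℕ) (I : (f : F) → (Fin (ar f) → A) → A)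
  (lt : A → A → Prop) (prec : F → F → Prop)

/-- `s ⊒∼ t` : both non-variable, and `s >_A t`, or `s ≥_A t` and `root(s) ≿ root(t)`. -/
def QGE (s t : Term F ar V) : Prop :=
  ∃ (f : F) (ss : Fin (ar f) → Term F ar V) (g : F) (ts : Fin (ar g) → Term F ar V),
    s = Term.app f ss ∧ t = Term.app g ts ∧
      (GTA ar I lt s t ∨ (GEA ar I lt s t ∧ prec f g))

/-- `s ⊐ t` : both non-variable, and `s >_A t`, or `s ≥_A t` and `root(s) ≻ root(t)`. -/
def QGT (s t : Term F ar V) : Prop :=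
  ∃ (f : F) (ss : Fin (ar f) → Term F ar V) (g : F) (ts : Fin (ar g) → Term F ar V),
    s = Term.app f ss ∧ t = Term.app g ts ∧
      (GTA ar I lt s t ∨ (GEA ar I lt s t ∧ prec f g ∧ ¬ prec g f))

variable (Im : (f : F) → (Fin (ar f) → A) → A)

/-- Interpretation of the marked term `t♯` (root symbol interpreted by `Im`). -/
def evalSharp (α : V → A) : Term F ar V → A
  | .var v => α v
  | .app f ts => Im f (fun i => (ts i).eval I α)

/-- `s♯ >_A t♯`. -/
def GTAS (s t : Term F ar V) : Prop :=
  ∀ α : V → A, lt (evalSharp ar I Im α t) (evalSharp ar I Im α s)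

/-- `s♯ ≥_A t♯`. -/
def GEAS (s t : Term F ar V) : Prop :=
  ∀ α : V → A, RC lt (evalSharp ar I Im α t) (evalSharp ar I Im α s)

/-- Marked version of `⊒∼` : `s♯ >_A t♯`, or `s♯ ≥_A t♯` and `root(s) ≿ root(t)`. -/
def QGES (s t : Term F ar V) : Prop :=
  ∃ (f : F) (ss : Fin (ar f) → Term F ar V) (g : F) (ts : Fin (ar g) → Term F ar V),
    s = Term.app f ss ∧ t = Term.app g ts ∧
      (GTAS ar I lt Im s t ∨ (GEAS ar I lt Im s t ∧ prec f g))

/-- Marked version of `⊐` : `s♯ >_A t♯`, or `s♯ ≥_A t♯` and `root(s) ≻ root(t)`. -/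
def QGTS (s t : Term F ar V) : Prop :=
  ∃ (f : F) (ss : Fin (ar f) → Term F ar V) (g : F) (ts : Fin (ar g) → Term F ar V),
    s = Term.app f ss ∧ t = Term.app g ts ∧
      (GTAS ar I lt Im s t ∨ (GEAS ar I lt Im s t ∧ prec f g ∧ ¬ prec g f))

/-- The generalized weighted path order: `s ≥_A t` and `s >_spo t` for the SPO induced
from the marked order pair. -/
def GWPO (s t : Term F ar V) : Prop :=
  GEA ar I lt s t ∧ SPO (QGES ar I lt prec Im) (QGTS ar I lt prec Im) s t

end Pair

/-- Signature `{0, s, p, −, ÷}`: symbol `0` is `zero` (arity 0), `1` is `s`, `2` is `p`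
(arity 1), `3` is `−`, `4` is `÷` (arity 2). -/
def ar17 : Fin 5 → ℕ
  | ⟨0, _⟩ => 0
  | ⟨1, _⟩ => 1
  | ⟨2, _⟩ => 1
  | ⟨3, _⟩ => 2
  | ⟨4, _⟩ => 2

/-- The constant `0`. -/
abbrev z17 : Term (Fin 5) ar17 ℕ := Term.app 0 ![]
/-- `s(t)`. -/
abbrev s17 (t : Term (Fin 5) ar17 ℕ) : Term (Fin 5) ar17 ℕ := Term.app 1 ![t]
/-- `p(t)`. -/
abbrev p17 (t : Term (Fin 5) ar17 ℕ) : Term (Fin 5) ar17 ℕ := Term.app 2 ![t]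
/-- `t − u`. -/
abbrev sub17 (t u : Term (Fin 5) ar17 ℕ) : Term (Fin 5) ar17 ℕ := Term.app 3 ![t, u]
/-- `t ÷ u`. -/
abbrev div17 (t u : Term (Fin 5) ar17 ℕ) : Term (Fin 5) ar17 ℕ := Term.app 4 ![t, u]
/-- The variable `x`. -/
abbrev x17 : Term (Fin 5) ar17 ℕ := Term.var 0
/-- The variable `y`. -/
abbrev y17 : Term (Fin 5) ar17 ℕ := Term.var 1

/-- The round-up division TRS. -/
abbrev R17 : Set (Term (Fin 5) ar17 ℕ × Term (Fin 5) ar17 ℕ) :=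
  { (p17 z17, z17),
    (p17 (s17 x17), x17),
    (sub17 x17 z17, x17),
    (sub17 x17 (s17 y17), sub17 (p17 x17) y17),
    (div17 z17 (s17 y17), z17),
    (div17 (s17 x17) (s17 y17), s17 (div17 (sub17 x17 y17) (s17 y17))) }


section Termination17

/-- Intended value semantics: `p` is truncated predecessor, `−` truncated subtraction,
`÷` round-up division. Preserved by every rule of `R17`. -/
private def vmeas : Term (Fin 5) ar17 ℕ → ℕ
  | .var _ => 0
  | .app ⟨0, _⟩ _ => 0
  | .app ⟨1, _⟩ a => vmeas (a ⟨0, Nat.zero_lt_one⟩) + 1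
  | .app ⟨2, _⟩ a => vmeas (a ⟨0, Nat.zero_lt_one⟩) - 1
  | .app ⟨3, _⟩ a => vmeas (a ⟨0, Nat.zero_lt_two⟩) - vmeas (a ⟨1, Nat.one_lt_two⟩)
  | .app ⟨4, _⟩ a =>
      (vmeas (a ⟨0, Nat.zero_lt_two⟩) + vmeas (a ⟨1, Nat.one_lt_two⟩) - 1) /
        vmeas (a ⟨1, Nat.one_lt_two⟩)

/-- Work measure: strictly decreases along every rewrite step. -/
private def dmeas : Term (Fin 5) ar17 ℕ → ℕ
  | .var _ => 0
  | .app ⟨0, _⟩ _ => 0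
  | .app ⟨1, _⟩ a => dmeas (a ⟨0, Nat.zero_lt_one⟩)
  | .app ⟨2, _⟩ a => dmeas (a ⟨0, Nat.zero_lt_one⟩) + 1
  | .app ⟨3, _⟩ a => dmeas (a ⟨0, Nat.zero_lt_two⟩) + dmeas (a ⟨1, Nat.one_lt_two⟩) +
      2 * vmeas (a ⟨1, Nat.one_lt_two⟩) + 1
  | .app ⟨4, _⟩ a => dmeas (a ⟨0, Nat.zero_lt_two⟩) +
      (vmeas (a ⟨0, Nat.zero_lt_two⟩) + 1) *
        (dmeas (a ⟨1, Nat.one_lt_two⟩) + 2 * vmeas (a ⟨1, Nat.one_lt_two⟩) + 2)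

private lemma ceil_step (a b : ℕ) :
    (a + 1 + (b + 1) - 1) / (b + 1) = (a - b + (b + 1) - 1) / (b + 1) + 1 := by
  have h1 : a + 1 + (b + 1) - 1 = a + (b + 1) := by omega
  have h2 : a - b + (b + 1) - 1 = a - b + b := by omega
  rw [h1, h2]
  rcases le_or_gt b a with h | h
  · have h3 : a - b + b = a := by omega
    rw [h3, Nat.add_div_right _ (Nat.succ_pos b)]
  · have h3 : a - b = 0 := by omega
    have hb : b / (b + 1) = 0 := Nat.div_eq_of_lt (by omega)
    have ha : (a + (b + 1)) / (b + 1) = a / (b + 1) + 1 :=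
      Nat.add_div_right _ (Nat.succ_pos b)
    have ha0 : a / (b + 1) = 0 := Nat.div_eq_of_lt (by omega)
    rw [h3, Nat.zero_add, hb, ha, ha0]

private lemma div_key (da db va vb : ℕ) :
    da + db + 2 * vb + 1 + (va - vb + 1) * (db + 2 * (vb + 1) + 2) <
      da + (va + 2) * (db + 2 * (vb + 1) + 2) := by
  have h1 : (va - vb + 1) * (db + 2 * (vb + 1) + 2) ≤
      (va + 1) * (db + 2 * (vb + 1) + 2) :=
    Nat.mul_le_mul_right _ (by omega)
  nlinarith

private lemma rewrite_meas {s t : Term (Fin 5) ar17 ℕ} (h : Rewrite R17 s t) :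
    vmeas s = vmeas t ∧ dmeas t < dmeas s := by
  induction h with
  | rule σ hm =>
    rename_i l r
    simp only [R17, Set.mem_insert_iff, Set.mem_singleton_iff, Prod.mk.injEq] at hm
    rcases hm with ⟨hl, hr⟩ | ⟨hl, hr⟩ | ⟨hl, hr⟩ | ⟨hl, hr⟩ | ⟨hl, hr⟩ | ⟨hl, hr⟩ <;>
      subst hl <;> subst hr
    · -- p(0) → 0
      exact ⟨rfl, by show (0 : ℕ) < 0 + 1; omega⟩
    · -- p(s(x)) → x
      refine ⟨?_, ?_⟩
      · show vmeas (σ 0) + 1 - 1 = vmeas (σ 0); omega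
      · show dmeas (σ 0) < dmeas (σ 0) + 1; omega
    · -- x − 0 → x
      refine ⟨?_, ?_⟩
      · show vmeas (σ 0) - 0 = vmeas (σ 0); omega
      · show dmeas (σ 0) < dmeas (σ 0) + 0 + 2 * 0 + 1; omega
    · -- x − s(y) → p(x) − y
      refine ⟨?_, ?_⟩
      · show vmeas (σ 0) - (vmeas (σ 1) + 1) = vmeas (σ 0) - 1 - vmeas (σ 1); omega
      · show dmeas (σ 0) + 1 + dmeas (σ 1) + 2 * vmeas (σ 1) + 1 <
          dmeas (σ 0) + dmeas (σ 1) + 2 * (vmeas (σ 1) + 1) + 1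
        omega
    · -- 0 ÷ s(y) → 0
      refine ⟨?_, ?_⟩
      · show (0 + (vmeas (σ 1) + 1) - 1) / (vmeas (σ 1) + 1) = 0
        rw [Nat.zero_add]
        exact Nat.div_eq_of_lt (by omega)
      · show (0 : ℕ) < 0 + (0 + 1) * (dmeas (σ 1) + 2 * (vmeas (σ 1) + 1) + 2)
        positivity
    · -- s(x) ÷ s(y) → s((x − y) ÷ s(y))
      refine ⟨?_, ?_⟩
      · show (vmeas (σ 0) + 1 + (vmeas (σ 1) + 1) - 1) / (vmeas (σ 1) + 1) =
          (vmeas (σ 0) - vmeas (σ 1) + (vmeas (σ 1) + 1) - 1) / (vmeas (σ 1) + 1) + 1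
        exact ceil_step _ _
      · show dmeas (σ 0) + dmeas (σ 1) + 2 * vmeas (σ 1) + 1 +
            (vmeas (σ 0) - vmeas (σ 1) + 1) * (dmeas (σ 1) + 2 * (vmeas (σ 1) + 1) + 2) <
          dmeas (σ 0) + (vmeas (σ 0) + 1 + 1) * (dmeas (σ 1) + 2 * (vmeas (σ 1) + 1) + 2)
        have := div_key (dmeas (σ 0)) (dmeas (σ 1)) (vmeas (σ 0)) (vmeas (σ 1))
        convert this using 3 <;> ring
  | ctx f args i hst ih =>
    rename_i s t
    obtain ⟨hv, hd⟩ := ih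
    obtain ⟨fv, hf⟩ := f
    interval_cases fv
    · exact absurd i.isLt (Nat.not_lt_zero _)
    · -- s
      obtain ⟨iv, hi⟩ := i
      have hi1 : iv < 1 := hi
      interval_cases iv
      have es : Function.update args ⟨0, hi⟩ s ⟨0, Nat.zero_lt_one⟩ = s :=
        Function.update_self _ _ _
      have et : Function.update args ⟨0, hi⟩ t ⟨0, Nat.zero_lt_one⟩ = t :=
        Function.update_self _ _ _
      refine ⟨?_, ?_⟩
      · show vmeas (Function.update args ⟨0, hi⟩ s ⟨0, Nat.zero_lt_one⟩) + 1 =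
          vmeas (Function.update args ⟨0, hi⟩ t ⟨0, Nat.zero_lt_one⟩) + 1
        rw [es, et, hv]
      · show dmeas (Function.update args ⟨0, hi⟩ t ⟨0, Nat.zero_lt_one⟩) <
          dmeas (Function.update args ⟨0, hi⟩ s ⟨0, Nat.zero_lt_one⟩)
        rw [es, et]; exact hd
    · -- p
      obtain ⟨iv, hi⟩ := i
      have hi1 : iv < 1 := hi
      interval_cases iv
      have es : Function.update args ⟨0, hi⟩ s ⟨0, Nat.zero_lt_one⟩ = s :=
        Function.update_self _ _ _
      have et : Function.update args ⟨0, hi⟩ t ⟨0, Nat.zero_lt_one⟩ = t :=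
        Function.update_self _ _ _
      refine ⟨?_, ?_⟩
      · show vmeas (Function.update args ⟨0, hi⟩ s ⟨0, Nat.zero_lt_one⟩) - 1 =
          vmeas (Function.update args ⟨0, hi⟩ t ⟨0, Nat.zero_lt_one⟩) - 1
        rw [es, et, hv]
      · show dmeas (Function.update args ⟨0, hi⟩ t ⟨0, Nat.zero_lt_one⟩) + 1 <
          dmeas (Function.update args ⟨0, hi⟩ s ⟨0, Nat.zero_lt_one⟩) + 1
        rw [es, et]; omega
    · -- −
      obtain ⟨iv, hi⟩ := i
      have hi1 : iv < 2 := hi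
      interval_cases iv
      · have es : Function.update args ⟨0, hi⟩ s ⟨0, Nat.zero_lt_two⟩ = s :=
          Function.update_self _ _ _
        have et : Function.update args ⟨0, hi⟩ t ⟨0, Nat.zero_lt_two⟩ = t :=
          Function.update_self _ _ _
        have es1 : Function.update args ⟨0, hi⟩ s ⟨1, Nat.one_lt_two⟩ =
            args ⟨1, Nat.one_lt_two⟩ :=
          Function.update_of_ne (Fin.ne_of_val_ne (show (1 : ℕ) ≠ 0 by omega)) _ _
        have et1 : Function.update args ⟨0, hi⟩ t ⟨1, Nat.one_lt_two⟩ =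
            args ⟨1, Nat.one_lt_two⟩ :=
          Function.update_of_ne (Fin.ne_of_val_ne (show (1 : ℕ) ≠ 0 by omega)) _ _
        refine ⟨?_, ?_⟩
        · show vmeas (Function.update args ⟨0, hi⟩ s ⟨0, Nat.zero_lt_two⟩) -
              vmeas (Function.update args ⟨0, hi⟩ s ⟨1, Nat.one_lt_two⟩) =
            vmeas (Function.update args ⟨0, hi⟩ t ⟨0, Nat.zero_lt_two⟩) -
              vmeas (Function.update args ⟨0, hi⟩ t ⟨1, Nat.one_lt_two⟩)
          rw [es, et, es1, et1, hv]
        · show dmeas (Function.update args ⟨0, hi⟩ t ⟨0, Nat.zero_lt_two⟩) +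
              dmeas (Function.update args ⟨0, hi⟩ t ⟨1, Nat.one_lt_two⟩) +
              2 * vmeas (Function.update args ⟨0, hi⟩ t ⟨1, Nat.one_lt_two⟩) + 1 <
            dmeas (Function.update args ⟨0, hi⟩ s ⟨0, Nat.zero_lt_two⟩) +
              dmeas (Function.update args ⟨0, hi⟩ s ⟨1, Nat.one_lt_two⟩) +
              2 * vmeas (Function.update args ⟨0, hi⟩ s ⟨1, Nat.one_lt_two⟩) + 1
          rw [es, et, es1, et1]; omega
      · have es : Function.update args ⟨1, hi⟩ s ⟨1, Nat.one_lt_two⟩ = s :=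
          Function.update_self _ _ _
        have et : Function.update args ⟨1, hi⟩ t ⟨1, Nat.one_lt_two⟩ = t :=
          Function.update_self _ _ _
        have es0 : Function.update args ⟨1, hi⟩ s ⟨0, Nat.zero_lt_two⟩ =
            args ⟨0, Nat.zero_lt_two⟩ :=
          Function.update_of_ne (Fin.ne_of_val_ne (show (0 : ℕ) ≠ 1 by omega)) _ _
        have et0 : Function.update args ⟨1, hi⟩ t ⟨0, Nat.zero_lt_two⟩ =
            args ⟨0, Nat.zero_lt_two⟩ :=
          Function.update_of_ne (Fin.ne_of_val_ne (show (0 : ℕ) ≠ 1 by omega)) _ _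
        refine ⟨?_, ?_⟩
        · show vmeas (Function.update args ⟨1, hi⟩ s ⟨0, Nat.zero_lt_two⟩) -
              vmeas (Function.update args ⟨1, hi⟩ s ⟨1, Nat.one_lt_two⟩) =
            vmeas (Function.update args ⟨1, hi⟩ t ⟨0, Nat.zero_lt_two⟩) -
              vmeas (Function.update args ⟨1, hi⟩ t ⟨1, Nat.one_lt_two⟩)
          rw [es, et, es0, et0, hv]
        · show dmeas (Function.update args ⟨1, hi⟩ t ⟨0, Nat.zero_lt_two⟩) +
              dmeas (Function.update args ⟨1, hi⟩ t ⟨1, Nat.one_lt_two⟩) +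
              2 * vmeas (Function.update args ⟨1, hi⟩ t ⟨1, Nat.one_lt_two⟩) + 1 <
            dmeas (Function.update args ⟨1, hi⟩ s ⟨0, Nat.zero_lt_two⟩) +
              dmeas (Function.update args ⟨1, hi⟩ s ⟨1, Nat.one_lt_two⟩) +
              2 * vmeas (Function.update args ⟨1, hi⟩ s ⟨1, Nat.one_lt_two⟩) + 1
          rw [es, et, es0, et0, hv]; omega
    · -- ÷
      obtain ⟨iv, hi⟩ := i
      have hi1 : iv < 2 := hi
      interval_cases iv
      · have es : Function.update args ⟨0, hi⟩ s ⟨0, Nat.zero_lt_two⟩ = s :=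
          Function.update_self _ _ _
        have et : Function.update args ⟨0, hi⟩ t ⟨0, Nat.zero_lt_two⟩ = t :=
          Function.update_self _ _ _
        have es1 : Function.update args ⟨0, hi⟩ s ⟨1, Nat.one_lt_two⟩ =
            args ⟨1, Nat.one_lt_two⟩ :=
          Function.update_of_ne (Fin.ne_of_val_ne (show (1 : ℕ) ≠ 0 by omega)) _ _
        have et1 : Function.update args ⟨0, hi⟩ t ⟨1, Nat.one_lt_two⟩ =
            args ⟨1, Nat.one_lt_two⟩ :=
          Function.update_of_ne (Fin.ne_of_val_ne (show (1 : ℕ) ≠ 0 by omega)) _ _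
        refine ⟨?_, ?_⟩
        · show (vmeas (Function.update args ⟨0, hi⟩ s ⟨0, Nat.zero_lt_two⟩) +
              vmeas (Function.update args ⟨0, hi⟩ s ⟨1, Nat.one_lt_two⟩) - 1) /
              vmeas (Function.update args ⟨0, hi⟩ s ⟨1, Nat.one_lt_two⟩) =
            (vmeas (Function.update args ⟨0, hi⟩ t ⟨0, Nat.zero_lt_two⟩) +
              vmeas (Function.update args ⟨0, hi⟩ t ⟨1, Nat.one_lt_two⟩) - 1) /
              vmeas (Function.update args ⟨0, hi⟩ t ⟨1, Nat.one_lt_two⟩)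
          rw [es, et, es1, et1, hv]
        · show dmeas (Function.update args ⟨0, hi⟩ t ⟨0, Nat.zero_lt_two⟩) +
              (vmeas (Function.update args ⟨0, hi⟩ t ⟨0, Nat.zero_lt_two⟩) + 1) *
                (dmeas (Function.update args ⟨0, hi⟩ t ⟨1, Nat.one_lt_two⟩) +
                  2 * vmeas (Function.update args ⟨0, hi⟩ t ⟨1, Nat.one_lt_two⟩) + 2) <
            dmeas (Function.update args ⟨0, hi⟩ s ⟨0, Nat.zero_lt_two⟩) +
              (vmeas (Function.update args ⟨0, hi⟩ s ⟨0, Nat.zero_lt_two⟩) + 1) *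
                (dmeas (Function.update args ⟨0, hi⟩ s ⟨1, Nat.one_lt_two⟩) +
                  2 * vmeas (Function.update args ⟨0, hi⟩ s ⟨1, Nat.one_lt_two⟩) + 2)
          rw [es, et, es1, et1, hv]
          exact Nat.add_lt_add_right hd _
      · have es : Function.update args ⟨1, hi⟩ s ⟨1, Nat.one_lt_two⟩ = s :=
          Function.update_self _ _ _
        have et : Function.update args ⟨1, hi⟩ t ⟨1, Nat.one_lt_two⟩ = t :=
          Function.update_self _ _ _
        have es0 : Function.update args ⟨1, hi⟩ s ⟨0, Nat.zero_lt_two⟩ =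
            args ⟨0, Nat.zero_lt_two⟩ :=
          Function.update_of_ne (Fin.ne_of_val_ne (show (0 : ℕ) ≠ 1 by omega)) _ _
        have et0 : Function.update args ⟨1, hi⟩ t ⟨0, Nat.zero_lt_two⟩ =
            args ⟨0, Nat.zero_lt_two⟩ :=
          Function.update_of_ne (Fin.ne_of_val_ne (show (0 : ℕ) ≠ 1 by omega)) _ _
        refine ⟨?_, ?_⟩
        · show (vmeas (Function.update args ⟨1, hi⟩ s ⟨0, Nat.zero_lt_two⟩) +
              vmeas (Function.update args ⟨1, hi⟩ s ⟨1, Nat.one_lt_two⟩) - 1) /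
              vmeas (Function.update args ⟨1, hi⟩ s ⟨1, Nat.one_lt_two⟩) =
            (vmeas (Function.update args ⟨1, hi⟩ t ⟨0, Nat.zero_lt_two⟩) +
              vmeas (Function.update args ⟨1, hi⟩ t ⟨1, Nat.one_lt_two⟩) - 1) /
              vmeas (Function.update args ⟨1, hi⟩ t ⟨1, Nat.one_lt_two⟩)
          rw [es, et, es0, et0, hv]
        · show dmeas (Function.update args ⟨1, hi⟩ t ⟨0, Nat.zero_lt_two⟩) +
              (vmeas (Function.update args ⟨1, hi⟩ t ⟨0, Nat.zero_lt_two⟩) + 1) *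
                (dmeas (Function.update args ⟨1, hi⟩ t ⟨1, Nat.one_lt_two⟩) +
                  2 * vmeas (Function.update args ⟨1, hi⟩ t ⟨1, Nat.one_lt_two⟩) + 2) <
            dmeas (Function.update args ⟨1, hi⟩ s ⟨0, Nat.zero_lt_two⟩) +
              (vmeas (Function.update args ⟨1, hi⟩ s ⟨0, Nat.zero_lt_two⟩) + 1) *
                (dmeas (Function.update args ⟨1, hi⟩ s ⟨1, Nat.one_lt_two⟩) +
                  2 * vmeas (Function.update args ⟨1, hi⟩ s ⟨1, Nat.one_lt_two⟩) + 2)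
          rw [es, et, es0, et0, hv]
          exact Nat.add_lt_add_left
            (Nat.mul_lt_mul_of_pos_left (by omega) (Nat.succ_pos _)) _

end Termination17

/-- The round-up division TRS is terminating: its rewrite relation is
well-founded. -/
theorem division_trs_terminating :
    WellFounded (fun s t : Term (Fin 5) ar17 ℕ => Rewrite R17 t s) := by
  exact Subrelation.wf (fun h => (rewrite_meas h).2)
    (InvImage.wf dmeas Nat.lt_wfRel.wf)
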